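/- arXiv:1711.00818 — 4 statements merged into one kernel-verified Lean document; each statement's English description precedes it below -/
import Mathlib

section
/- Let τ > 0, z₀ ∈ ℝ, and let t ∈ ℝ be such that Q(t) := (τ² cosh² t + (τ t + z₀)²)/(2τ cosh t) satisfies 0 < Q(t) ≤ 1, and set λ(t) := 1 − (2/π)·arcsin Q(t). Then for every ϑ ∈ [−π, π]: ‖κ̂(t,ϑ)‖ = 1 if and only if |ϑ| = (π/2)·λ(t). That is, the intersection of the catenoid with the unit sphere ∂B³ is exactly the pair of curves ϑ = ± (π/2)λ(t). -/
noncomputable section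

/-- The catenoid parametrization `κ̂(t,ϑ) = (1 − τ cosh t cos ϑ, τ cosh t sin ϑ, τ t + z₀)`. -/
def kappaHat (τ z₀ : ℝ) (t ϑ : ℝ) : EuclideanSpace ℝ (Fin 3) :=
  WithLp.toLp 2 ![1 - τ * Real.cosh t * Real.cos ϑ, τ * Real.cosh t * Real.sin ϑ, τ * t + z₀]

/-- `Q(t) = (τ² cosh² t + (τ t + z₀)²)/(2τ cosh t)`. -/
def Qfun (τ z₀ t : ℝ) : ℝ :=
  (τ ^ 2 * Real.cosh t ^ 2 + (τ * t + z₀) ^ 2) / (2 * τ * Real.cosh t)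

/-- The height-dependent scaling factor `λ(t) = 1 − (2/π) arcsin Q(t)`. -/
def lambdaFun (τ z₀ t : ℝ) : ℝ := 1 - 2 / Real.pi * Real.arcsin (Qfun τ z₀ t)

/-! The circle `ϑ ↦ (1 − a cos ϑ, a sin ϑ, h)` has centre `(1, 0, h)` and radius `|a|`, so its
points on the unit sphere are cut out by the single equation `cos ϑ = (a² + h²) / (2a)`;
inverting the cosine on `[-π, π]` gives `|ϑ| = arccos Q(t)`, and `arccos = π/2 − arcsin`. -/

open Real

lemma norm_sq_circle_point (a h ϑ : ℝ) :
    ‖WithLp.toLp 2 ![1 - a * cos ϑ, a * sin ϑ, h]‖ ^ 2 = 1 - 2 * a * cos ϑ + a ^ 2 + h ^ 2 := by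
  rw [EuclideanSpace.norm_sq_eq, Fin.sum_univ_three]
  simp only [Matrix.cons_val_zero, Matrix.cons_val_one, Matrix.cons_val_two,
    Matrix.head_cons, Matrix.tail_cons, Real.norm_eq_abs, sq_abs]
  linear_combination a ^ 2 * sin_sq_add_cos_sq ϑ

lemma norm_circle_point_eq_one_iff {a : ℝ} (ha : a ≠ 0) (h ϑ : ℝ) :
    ‖WithLp.toLp 2 ![1 - a * cos ϑ, a * sin ϑ, h]‖ = 1 ↔ cos ϑ = (a ^ 2 + h ^ 2) / (2 * a) := by
  rw [← pow_eq_one_iff_of_nonneg (norm_nonneg _) two_ne_zero, norm_sq_circle_point,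
    eq_div_iff (mul_ne_zero two_ne_zero ha)]
  constructor <;> intro heq <;> linarith

lemma norm_kappaHat_eq_one_iff {τ : ℝ} (hτ : τ ≠ 0) (z₀ t ϑ : ℝ) :
    ‖kappaHat τ z₀ t ϑ‖ = 1 ↔ cos ϑ = Qfun τ z₀ t := by
  rw [kappaHat, norm_circle_point_eq_one_iff (mul_ne_zero hτ (cosh_pos t).ne'), Qfun]
  ring_nf

lemma pi_div_two_mul_one_sub_arcsin (x : ℝ) :
    π / 2 * (1 - 2 / π * arcsin x) = arccos x := by
  rw [arccos_eq_pi_div_two_sub_arcsin]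
  field_simp

lemma cos_eq_iff_abs_eq_arccos {ϑ x : ℝ} (hϑ : ϑ ∈ Set.Icc (-π) π) (hx₁ : -1 ≤ x) (hx₂ : x ≤ 1) :
    cos ϑ = x ↔ |ϑ| = arccos x := by
  rw [← cos_abs]
  constructor
  · rintro rfl
    rw [arccos_cos (abs_nonneg ϑ) (abs_le.mpr hϑ)]
  · intro h
    rw [h, cos_arccos hx₁ hx₂]

/-- The intersection of the catenoid with the unit sphere `∂B³` is exactly the pair of
curves `ϑ = ± (π/2) λ(t)`: for `ϑ ∈ [−π, π]`, `‖κ̂(t,ϑ)‖ = 1` iff `|ϑ| = (π/2) λ(t)`. -/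
theorem kappaHat_meets_unit_sphere (τ z₀ t : ℝ) (hτ : 0 < τ)
    (hQpos : 0 < Qfun τ z₀ t) (hQle : Qfun τ z₀ t ≤ 1) :
    ∀ ϑ ∈ Set.Icc (-Real.pi) Real.pi,
      ‖kappaHat τ z₀ t ϑ‖ = 1 ↔ |ϑ| = Real.pi / 2 * lambdaFun τ z₀ t := by
  intro ϑ hϑ
  rw [norm_kappaHat_eq_one_iff hτ.ne', lambdaFun, pi_div_two_mul_one_sub_arcsin]
  exact cos_eq_iff_abs_eq_arccos hϑ (by linarith) hQle

end
end

section
/- Given c > 0 there exists m₀ > 0 such that for every integer m > m₀ and all ζ, ξ ∈ [−c, c] the following holds, where τ := (1/(20m))·e^{ζ−m/2}, a := arcosh(e^{m/2−ζ}), and z₀ := τξ + τa: for every t ∈ [−a, a], the function Θ(t) := (1/(2τ))·(z₀ + τ t)²·sech² t − τ/2 + (z₀ + τ t)·tanh t satisfies |Θ(t)| ≤ 4·(mτ + m²·τ·sech² t). -/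
/-- The inverse hyperbolic cosine: `arcosh x = log (x + √(x² − 1))` for `x ≥ 1`. -/
noncomputable def arcosh (x : ℝ) : ℝ := Real.log (x + Real.sqrt (x ^ 2 - 1))

lemma abs_tanh_le_one (t : ℝ) : |Real.tanh t| ≤ 1 := by
  have hc : 0 < Real.cosh t := Real.cosh_pos t
  have h1 : Real.cosh t - Real.sinh t = Real.exp (-t) := Real.cosh_sub_sinh t
  have h2 : Real.cosh t + Real.sinh t = Real.exp t := Real.cosh_add_sinh t
  have he1 := Real.exp_pos (-t)
  have he2 := Real.exp_pos t
  rw [Real.tanh_eq_sinh_div_cosh, abs_div, abs_of_pos hc, div_le_one hc, abs_le]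
  constructor <;> linarith

/-- For `m` large (depending on `c`) and parameters `ζ, ξ ∈ [−c, c]`, with
`τ = e^{ζ−m/2}/(20m)`, `a = arcosh (e^{m/2−ζ})` and `z₀ = τξ + τa`, the angle function
`Θ(t) = (1/(2τ)) (z₀ + τt)² sech² t − τ/2 + (z₀ + τt) tanh t` along the boundary curve of
the half-catenoidal bridge satisfies `|Θ(t)| ≤ 4 (mτ + m² τ sech² t)` for `t ∈ [−a, a]`. -/
theorem Theta_estimate (c : ℝ) (hc : 0 < c) :
    ∃ m₀ : ℕ, 0 < m₀ ∧ ∀ m : ℕ, m₀ < m →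
      ∀ ζ ξ : ℝ, ζ ∈ Set.Icc (-c) c → ξ ∈ Set.Icc (-c) c →
        let τ : ℝ := 1 / (20 * m) * Real.exp (ζ - m / 2)
        let a : ℝ := arcosh (Real.exp (m / 2 - ζ))
        let z₀ : ℝ := τ * ξ + τ * a
        ∀ t ∈ Set.Icc (-a) a,
          let Θ : ℝ := 1 / (2 * τ) * (z₀ + τ * t) ^ 2 * ((Real.cosh t)⁻¹) ^ 2 - τ / 2 +
            (z₀ + τ * t) * Real.tanh t
          |Θ| ≤ 4 * (m * τ + m ^ 2 * τ * ((Real.cosh t)⁻¹) ^ 2) := by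
  refine ⟨⌈3 * c + 3⌉₊, Nat.ceil_pos.mpr (by linarith), ?_⟩
  intro m hm ζ ξ hζ hξ τ a z₀ t ht Θ
  have hm3 : 3 * c + 3 ≤ (m : ℝ) := Nat.ceil_le.mp hm.le
  have hm1 : (1 : ℝ) ≤ m := by linarith
  have hmpos : (0 : ℝ) < m := by linarith
  have hτ : 0 < τ := by
    show 0 < 1 / (20 * (m : ℝ)) * Real.exp (ζ - m / 2)
    exact mul_pos (one_div_pos.mpr (by linarith)) (Real.exp_pos _)
  -- bounds on a
  set x : ℝ := Real.exp ((m : ℝ) / 2 - ζ) with hxdef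
  have hx1 : 1 ≤ x := Real.one_le_exp (by linarith [hζ.2])
  have hsq : Real.sqrt (x ^ 2 - 1) ≤ x := by
    calc Real.sqrt (x ^ 2 - 1) ≤ Real.sqrt (x ^ 2) :=
          Real.sqrt_le_sqrt (by linarith)
      _ = x := Real.sqrt_sq (by linarith)
  have ha0 : 0 ≤ a := Real.log_nonneg (by nlinarith [Real.sqrt_nonneg (x ^ 2 - 1)])
  have ha2 : a ≤ (m : ℝ) / 2 - ζ + Real.log 2 := by
    have h1 : a ≤ Real.log (2 * x) := by
      apply Real.log_le_log (by nlinarith [Real.sqrt_nonneg (x ^ 2 - 1)])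
      nlinarith
    rw [Real.log_mul (by norm_num) (by linarith), hxdef, Real.log_exp] at h1
    linarith
  have hlog2 : Real.log 2 ≤ 1 := by
    have := Real.log_two_lt_d9; linarith
  have hK : |ξ + a + t| ≤ 2 * m := by
    rw [abs_le]
    constructor
    · linarith [hξ.1, ht.1, hζ.1]
    · linarith [hξ.2, ht.2, hζ.1]
  have hKl := (abs_le.mp hK).1
  have hKu := (abs_le.mp hK).2
  have hK2 : (ξ + a + t) ^ 2 ≤ (2 * m) ^ 2 := sq_le_sq' (by linarith) hKu
  -- sech bounds
  set s : ℝ := (Real.cosh t)⁻¹ with hsdef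
  have hcosh : 1 ≤ Real.cosh t := Real.one_le_cosh t
  have hs0 : 0 < s := inv_pos.mpr (by linarith)
  have hs1 : s ≤ 1 := by
    rw [hsdef, inv_le_one_iff₀]; right; exact hcosh
  have hs2 : s ^ 2 ≤ 1 := by nlinarith
  have hs2' : 0 ≤ s ^ 2 := sq_nonneg s
  -- tanh bound
  have htanh : |Real.tanh t| ≤ 1 := abs_tanh_le_one t
  have hKth : |(ξ + a + t) * Real.tanh t| ≤ 2 * m := by
    rw [abs_mul]
    calc |ξ + a + t| * |Real.tanh t| ≤ (2 * m) * 1 :=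
          mul_le_mul hK htanh (abs_nonneg _) (by linarith)
      _ = 2 * m := by ring
  have hKthl := (abs_le.mp hKth).1
  have hKthu := (abs_le.mp hKth).2
  -- rewrite Θ
  have hz : z₀ + τ * t = τ * (ξ + a + t) := by
    show τ * ξ + τ * a + τ * t = _; ring
  have hΘ : Θ = τ / 2 * (ξ + a + t) ^ 2 * s ^ 2 - τ / 2 + τ * ((ξ + a + t) * Real.tanh t) := by
    show 1 / (2 * τ) * (z₀ + τ * t) ^ 2 * s ^ 2 - τ / 2 + (z₀ + τ * t) * Real.tanh t = _
    rw [hz]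
    field_simp
  rw [hΘ, abs_le]
  have hmain1 : τ / 2 * (ξ + a + t) ^ 2 * s ^ 2 ≤ τ / 2 * (2 * m) ^ 2 * s ^ 2 := by
    apply mul_le_mul_of_nonneg_right _ hs2'
    exact mul_le_mul_of_nonneg_left hK2 (by linarith)
  have h3 : 0 ≤ τ / 2 * (ξ + a + t) ^ 2 * s ^ 2 := by positivity
  have h4 : τ * ((ξ + a + t) * Real.tanh t) ≤ τ * (2 * m) :=
    mul_le_mul_of_nonneg_left hKthu (by linarith)
  have h5 : τ * (-(2 * m)) ≤ τ * ((ξ + a + t) * Real.tanh t) :=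
    mul_le_mul_of_nonneg_left (by linarith) (by linarith)
  have h6 : 0 ≤ τ * (m : ℝ) ^ 2 * s ^ 2 := by positivity
  have h7 : (0 : ℝ) ≤ τ * m := by positivity
  have h8 : τ * 1 ≤ τ * m := mul_le_mul_of_nonneg_left hm1 hτ.le
  constructor
  · linarith
  · linarith
end

section
/- Let F : ℝ → ℝ be continuous and define u : ℝ → ℝ by u(t) := ∫₀^t [ (t − s)·tanh s·tanh t + (tanh t − tanh s) ]·F(s) ds. Then u is twice differentiable, u''(t) + 2 sech²(t)·u(t) = F(t) for every t ∈ ℝ, and u(0) = 0, u'(0) = 0. -/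
open intervalIntegral Real

/-! `φ = tanh` and `ψ t = t tanh t - 1` solve `y'' + q y = 0` for `q = 2 sech²` and have Wronskian
`φ ψ' - φ' ψ = 1`; the kernel of the integral is `ψ t φ s - φ t ψ s`. Differentiating
`ψ t ∫₀ᵗ φ F - φ t ∫₀ᵗ ψ F` once, the `F`-terms cancel; differentiating again, the homogeneous
equation gives `-q u` and the Wronskian contributes exactly `F`. -/

section VariationOfParameters

variable {φ ψ φ' ψ' q F : ℝ → ℝ}

noncomputable def variationOfParameters (φ ψ F : ℝ → ℝ) (t : ℝ) : ℝ :=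
  ∫ s in (0 : ℝ)..t, (ψ t * φ s - φ t * ψ s) * F s

theorem variationOfParameters_eq (hφ : Continuous φ) (hψ : Continuous ψ) (hF : Continuous F)
    (t : ℝ) :
    variationOfParameters φ ψ F t =
      ψ t * (∫ s in (0 : ℝ)..t, φ s * F s) - φ t * ∫ s in (0 : ℝ)..t, ψ s * F s := by
  have hφF : IntervalIntegrable (fun s => ψ t * (φ s * F s)) MeasureTheory.volume 0 t :=
    ((hφ.mul hF).intervalIntegrable 0 t).const_mul _
  have hψF : IntervalIntegrable (fun s => φ t * (ψ s * F s)) MeasureTheory.volume 0 t :=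
    ((hψ.mul hF).intervalIntegrable 0 t).const_mul _
  rw [← integral_const_mul, ← integral_const_mul, ← integral_sub hφF hψF]
  exact integral_congr fun s _ => by ring

theorem variationOfParameters_zero : variationOfParameters φ ψ F 0 = 0 :=
  integral_same

theorem hasDerivAt_integral_mul {f : ℝ → ℝ} (hf : Continuous f) (hF : Continuous F) (t : ℝ) :
    HasDerivAt (fun t => ∫ s in (0 : ℝ)..t, f s * F s) (f t * F t) t :=
  integral_hasDerivAt_right ((hf.mul hF).intervalIntegrable 0 t)
    ((hf.mul hF).stronglyMeasurableAtFilter _ _) (hf.mul hF).continuousAt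

theorem hasDerivAt_variationOfParameters (hF : Continuous F)
    (hφ : ∀ t, HasDerivAt φ (φ' t) t) (hψ : ∀ t, HasDerivAt ψ (ψ' t) t) (t : ℝ) :
    HasDerivAt (variationOfParameters φ ψ F)
      (ψ' t * (∫ s in (0 : ℝ)..t, φ s * F s) - φ' t * ∫ s in (0 : ℝ)..t, ψ s * F s) t := by
  have hφc : Continuous φ := continuous_iff_continuousAt.2 fun t => (hφ t).continuousAt
  have hψc : Continuous ψ := continuous_iff_continuousAt.2 fun t => (hψ t).continuousAt
  rw [show variationOfParameters φ ψ F = _ from funext (variationOfParameters_eq hφc hψc hF)]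
  exact ((hψ t).mul (hasDerivAt_integral_mul hφc hF t)).sub
    ((hφ t).mul (hasDerivAt_integral_mul hψc hF t)) |>.congr_deriv (by ring)

theorem hasDerivAt_deriv_variationOfParameters (hF : Continuous F)
    (hφ : ∀ t, HasDerivAt φ (φ' t) t) (hψ : ∀ t, HasDerivAt ψ (ψ' t) t)
    (hφ' : ∀ t, HasDerivAt φ' (-(q t * φ t)) t) (hψ' : ∀ t, HasDerivAt ψ' (-(q t * ψ t)) t)
    (hW : ∀ t, φ t * ψ' t - φ' t * ψ t = 1) (t : ℝ) :
    HasDerivAt (deriv (variationOfParameters φ ψ F))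
      (F t - q t * variationOfParameters φ ψ F t) t := by
  have hφc : Continuous φ := continuous_iff_continuousAt.2 fun t => (hφ t).continuousAt
  have hψc : Continuous ψ := continuous_iff_continuousAt.2 fun t => (hψ t).continuousAt
  rw [funext fun t => (hasDerivAt_variationOfParameters hF hφ hψ t).deriv,
    variationOfParameters_eq hφc hψc hF]
  exact ((hψ' t).mul (hasDerivAt_integral_mul hφc hF t)).sub
    ((hφ' t).mul (hasDerivAt_integral_mul hψc hF t)) |>.congr_deriv
      (by linear_combination F t * hW t)

end VariationOfParameters

theorem Real.inv_cosh_sq (x : ℝ) : (cosh x)⁻¹ ^ 2 = 1 - tanh x ^ 2 := by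
  rw [tanh_eq_sinh_div_cosh]
  field_simp [(cosh_pos x).ne']
  linarith [cosh_sq_sub_sinh_sq x]

theorem Real.hasDerivAt_tanh (x : ℝ) : HasDerivAt tanh (1 - tanh x ^ 2) x := by
  have h := (hasDerivAt_sinh x).div (hasDerivAt_cosh x) (cosh_pos x).ne'
  rw [show sinh / cosh = tanh from funext fun y => (tanh_eq_sinh_div_cosh y).symm] at h
  refine h.congr_deriv ?_
  rw [tanh_eq_sinh_div_cosh]
  field_simp

theorem Real.hasDerivAt_one_sub_tanh_sq (x : ℝ) :
    HasDerivAt (fun x => 1 - tanh x ^ 2) (-(2 * (1 - tanh x ^ 2) * tanh x)) x :=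
  (hasDerivAt_const x 1).sub ((hasDerivAt_tanh x).pow 2) |>.congr_deriv (by ring)

theorem Real.hasDerivAt_mul_tanh_sub_one (x : ℝ) :
    HasDerivAt (fun x => x * tanh x - 1) (tanh x + x * (1 - tanh x ^ 2)) x :=
  ((hasDerivAt_id x).mul (hasDerivAt_tanh x)).sub_const 1 |>.congr_deriv (by simp)

theorem Real.hasDerivAt_tanh_add_mul_one_sub_tanh_sq (x : ℝ) :
    HasDerivAt (fun x => tanh x + x * (1 - tanh x ^ 2))
      (-(2 * (1 - tanh x ^ 2) * (x * tanh x - 1))) x :=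
  (hasDerivAt_tanh x).add ((hasDerivAt_id x).mul (hasDerivAt_one_sub_tanh_sq x))
    |>.congr_deriv (by simp only [id]; ring)

/-- The variation-of-parameters solution of the zero-mode ODE `u'' + 2 sech² t · u = F`
on the catenoidal cylinder: `u(t) = ∫₀ᵗ [(t−s) tanh s tanh t + (tanh t − tanh s)] F(s) ds`
is twice differentiable, solves the equation, and satisfies `u(0) = u'(0) = 0`. -/
theorem zero_mode_ode_solution (F : ℝ → ℝ) (hF : Continuous F) :
    let u : ℝ → ℝ := fun t => ∫ s in (0:ℝ)..t,
      ((t - s) * Real.tanh s * Real.tanh t + (Real.tanh t - Real.tanh s)) * F s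
    (∀ t, DifferentiableAt ℝ u t) ∧
      (∀ t, DifferentiableAt ℝ (deriv u) t) ∧
      (∀ t, deriv (deriv u) t + 2 * ((Real.cosh t)⁻¹) ^ 2 * u t = F t) ∧
      u 0 = 0 ∧ deriv u 0 = 0 := by
  intro u
  have hu : u = variationOfParameters tanh (fun t => t * tanh t - 1) F :=
    funext fun t => integral_congr fun s _ => by ring
  have hu' := hasDerivAt_variationOfParameters hF hasDerivAt_tanh hasDerivAt_mul_tanh_sub_one
  have hu'' := hasDerivAt_deriv_variationOfParameters hF hasDerivAt_tanh
    hasDerivAt_mul_tanh_sub_one hasDerivAt_one_sub_tanh_sq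
    hasDerivAt_tanh_add_mul_one_sub_tanh_sq fun _ => by ring
  rw [hu]
  refine ⟨fun t => (hu' t).differentiableAt, fun t => (hu'' t).differentiableAt,
    fun t => ?_, variationOfParameters_zero, ?_⟩
  · rw [(hu'' t).deriv, inv_cosh_sq]
    ring
  · simp [(hu' 0).deriv]
end

section
/- Let n ≥ 3 be an integer, M > 0, and F : [0,1] → ℝ continuous with |F(s)| ≤ M for all s ∈ [0,1]. Then the function u(r) := −(1/(2n))·[ (r^n + r^{−n})·∫₀^r s^{n+1}·F(s) ds + r^n·∫_r^1 (s^{1+n} + s^{1−n})·F(s) ds ] satisfies |u(r)| ≤ (M/(n² − 4))·( r² − (2/n)·r^n ) for every r ∈ (0,1]; in particular |u(r)| ≤ M/(n² − 4) ≤ C M / n² for an absolute constant C. -/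
open intervalIntegral

/-- The mode-wise estimate from the proof of Proposition 6.2: for `n ≥ 3` and `|F| ≤ M`
on `[0,1]`, the explicit solution `u` of the `n`-th Fourier-mode equation satisfies
`|u(r)| ≤ (M/(n² − 4)) (r² − (2/n) rⁿ)` for `r ∈ (0,1]`; in particular
`|u(r)| ≤ M/(n² − 4) ≤ C M/n²` with the absolute constant `C = 2`. -/
theorem fourier_mode_disc_estimate (n : ℕ) (hn : 3 ≤ n) (M : ℝ) (hM : 0 < M)
    (F : ℝ → ℝ) (hF : ContinuousOn F (Set.Icc 0 1))
    (hFb : ∀ s ∈ Set.Icc (0:ℝ) 1, |F s| ≤ M) :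
    let u : ℝ → ℝ := fun r => -(1 / (2 * (n:ℝ))) *
      ((r ^ (n:ℤ) + r ^ (-(n:ℤ))) * (∫ s in (0:ℝ)..r, s ^ (n + 1) * F s) +
        r ^ (n:ℤ) * ∫ s in r..(1:ℝ), (s ^ ((1:ℤ) + n) + s ^ ((1:ℤ) - n)) * F s)
    ∀ r ∈ Set.Ioc (0:ℝ) 1,
      |u r| ≤ M / ((n:ℝ) ^ 2 - 4) * (r ^ 2 - 2 / (n:ℝ) * r ^ (n:ℤ)) ∧
        |u r| ≤ M / ((n:ℝ) ^ 2 - 4) ∧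
        M / ((n:ℝ) ^ 2 - 4) ≤ 2 * M / (n:ℝ) ^ 2 := by
  intro u r hr
  obtain ⟨hr0, hr1⟩ := hr
  have hnR : (3:ℝ) ≤ (n:ℝ) := by exact_mod_cast hn
  have hn0 : (0:ℝ) < n := by linarith
  have hn2 : (0:ℝ) < (n:ℝ) - 2 := by linarith
  have hn2' : (0:ℝ) < (n:ℝ) + 2 := by linarith
  have hnsq : (0:ℝ) < (n:ℝ) ^ 2 - 4 := by nlinarith
  have hp : (0:ℝ) < r ^ n := pow_pos hr0 n
  have hz1 : r ^ (n:ℤ) = r ^ n := zpow_natCast r n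
  have hz2 : r ^ (-(n:ℤ)) = (r ^ n)⁻¹ := by rw [zpow_neg, hz1]
  set p := r ^ n with hpdef
  set q := p⁻¹ with hqdef
  have hq : (0:ℝ) < q := inv_pos.mpr hp
  have hpq : p * q = 1 := mul_inv_cancel₀ (ne_of_gt hp)
  set A := ∫ s in (0:ℝ)..r, s ^ (n + 1) * F s with hAdef
  set B := ∫ s in r..(1:ℝ), (s ^ ((1:ℤ) + n) + s ^ ((1:ℤ) - n)) * F s with hBdef
  -- integrability on [0,r]
  have hsubA : Set.uIcc (0:ℝ) r ⊆ Set.Icc 0 1 := by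
    rw [Set.uIcc_of_le hr0.le]
    exact Set.Icc_subset_Icc le_rfl hr1
  have hint1 : IntervalIntegrable (fun s => s ^ (n + 1) * F s) MeasureTheory.volume 0 r := by
    apply ContinuousOn.intervalIntegrable
    exact (continuous_pow (n + 1)).continuousOn.mul (hF.mono hsubA)
  have hint2 : IntervalIntegrable (fun s => M * s ^ (n + 1)) MeasureTheory.volume 0 r := by
    apply ContinuousOn.intervalIntegrable
    exact continuousOn_const.mul (continuous_pow (n + 1)).continuousOn
  have hA : |A| ≤ M * r ^ (n + 2) / ((n:ℝ) + 2) := by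
    have h1 : |A| ≤ ∫ s in (0:ℝ)..r, |s ^ (n + 1) * F s| :=
      intervalIntegral.abs_integral_le_integral_abs hr0.le
    have h2 : (∫ s in (0:ℝ)..r, |s ^ (n + 1) * F s|) ≤ ∫ s in (0:ℝ)..r, M * s ^ (n + 1) := by
      apply intervalIntegral.integral_mono_on hr0.le hint1.abs hint2
      intro s hs
      have hs01 : s ∈ Set.Icc (0:ℝ) 1 := ⟨hs.1, hs.2.trans hr1⟩
      have h1' : (0:ℝ) ≤ s ^ (n + 1) := pow_nonneg hs.1 _
      rw [abs_mul, abs_of_nonneg h1', mul_comm]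
      exact mul_le_mul_of_nonneg_right (hFb s hs01) h1'
    have h3 : (∫ s in (0:ℝ)..r, M * s ^ (n + 1)) = M * r ^ (n + 2) / ((n:ℝ) + 2) := by
      rw [intervalIntegral.integral_const_mul, integral_pow]
      have : (0:ℝ) ^ (n + 1 + 1) = 0 := by
        exact zero_pow (by omega)
      rw [this]
      push_cast
      ring
    linarith
  -- integrability on [r,1]
  have hsubB : Set.uIcc r (1:ℝ) ⊆ Set.Icc 0 1 := by
    rw [Set.uIcc_of_le hr1]
    exact Set.Icc_subset_Icc hr0.le le_rfl
  have hgcont : ContinuousOn (fun s : ℝ => s ^ ((1:ℤ) + n) + s ^ ((1:ℤ) - n)) (Set.uIcc r 1) := by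
    rw [Set.uIcc_of_le hr1]
    apply ContinuousOn.add
    · exact continuousOn_id.zpow₀ _ (fun a ha => Or.inr (by positivity))
    · exact continuousOn_id.zpow₀ _ (fun a ha => Or.inl (by
        have : (0:ℝ) < a := lt_of_lt_of_le hr0 ha.1
        exact ne_of_gt this))
  have hint3 : IntervalIntegrable (fun s => (s ^ ((1:ℤ) + n) + s ^ ((1:ℤ) - n)) * F s)
      MeasureTheory.volume r 1 :=
    (hgcont.mul (hF.mono hsubB)).intervalIntegrable
  have hint4 : IntervalIntegrable (fun s => M * (s ^ ((1:ℤ) + n) + s ^ ((1:ℤ) - n)))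
      MeasureTheory.volume r 1 :=
    (continuousOn_const.mul hgcont).intervalIntegrable
  have hint5 : IntervalIntegrable (fun s : ℝ => s ^ ((1:ℤ) + n)) MeasureTheory.volume r 1 := by
    apply ContinuousOn.intervalIntegrable
    exact continuousOn_id.zpow₀ _ (fun a ha => Or.inr (by positivity))
  have hint6 : IntervalIntegrable (fun s : ℝ => s ^ ((1:ℤ) - n)) MeasureTheory.volume r 1 := by
    apply ContinuousOn.intervalIntegrable
    rw [Set.uIcc_of_le hr1]
    exact continuousOn_id.zpow₀ _ (fun a ha => Or.inl (ne_of_gt (lt_of_lt_of_le hr0 ha.1)))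
  have hzeronot : (0:ℝ) ∉ Set.uIcc r (1:ℝ) := by
    rw [Set.uIcc_of_le hr1]
    intro h
    exact absurd h.1 (not_le.mpr hr0)
  have hB : |B| ≤ M * ((1 - r ^ (n + 2)) / ((n:ℝ) + 2) + (r ^ 2 * q - 1) / ((n:ℝ) - 2)) := by
    have h1 : |B| ≤ ∫ s in r..(1:ℝ), |(s ^ ((1:ℤ) + n) + s ^ ((1:ℤ) - n)) * F s| :=
      intervalIntegral.abs_integral_le_integral_abs hr1
    have h2 : (∫ s in r..(1:ℝ), |(s ^ ((1:ℤ) + n) + s ^ ((1:ℤ) - n)) * F s|) ≤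
        ∫ s in r..(1:ℝ), M * (s ^ ((1:ℤ) + n) + s ^ ((1:ℤ) - n)) := by
      apply intervalIntegral.integral_mono_on hr1 hint3.abs hint4
      intro s hs
      have hs0 : (0:ℝ) < s := lt_of_lt_of_le hr0 hs.1
      have hs01 : s ∈ Set.Icc (0:ℝ) 1 := ⟨hs0.le, hs.2⟩
      have hg0 : (0:ℝ) ≤ s ^ ((1:ℤ) + n) + s ^ ((1:ℤ) - n) := by positivity
      rw [abs_mul, abs_of_nonneg hg0, mul_comm]
      exact mul_le_mul_of_nonneg_right (hFb s hs01) hg0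
    have h3 : (∫ s in r..(1:ℝ), M * (s ^ ((1:ℤ) + n) + s ^ ((1:ℤ) - n))) =
        M * ((1 - r ^ (n + 2)) / ((n:ℝ) + 2) + (r ^ 2 * q - 1) / ((n:ℝ) - 2)) := by
      rw [intervalIntegral.integral_const_mul, intervalIntegral.integral_add hint5 hint6]
      have e1 : (∫ s in r..(1:ℝ), s ^ ((1:ℤ) + n)) = (1 - r ^ (n + 2)) / ((n:ℝ) + 2) := by
        rw [integral_zpow (Or.inl (by positivity))]
        have h4 : ((1:ℤ) + n + 1) = ((n + 2 : ℕ) : ℤ) := by push_cast; ring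
        rw [h4, zpow_natCast, zpow_natCast]
        have : (1:ℝ) ^ (n + 2) = 1 := one_pow _
        rw [this]
        push_cast
        ring
      have e2 : (∫ s in r..(1:ℝ), s ^ ((1:ℤ) - n)) = (r ^ 2 * q - 1) / ((n:ℝ) - 2) := by
        rw [integral_zpow (Or.inr ⟨by omega, hzeronot⟩)]
        have h4 : ((1:ℤ) - n + 1) = 2 - (n:ℤ) := by ring
        rw [h4]
        have h5 : r ^ ((2:ℤ) - n) = r ^ 2 * q := by
          rw [zpow_sub₀ (ne_of_gt hr0), zpow_natCast, hqdef, hpdef, div_eq_mul_inv]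
          norm_num
        have h6 : (1:ℝ) ^ ((2:ℤ) - n) = 1 := one_zpow _
        rw [h5, h6]
        have h7 : (((1:ℤ) - n : ℤ) : ℝ) + 1 = 2 - (n:ℝ) := by push_cast; ring
        rw [h7]
        rw [div_eq_div_iff (ne_of_lt (by linarith : (2:ℝ) - (n:ℝ) < 0)) (ne_of_gt hn2)]
        ring
      rw [e1, e2]
    linarith
  -- main bound
  have habs : |u r| ≤ 1 / (2 * (n:ℝ)) * ((p + q) * |A| + p * |B|) := by
    have : u r = -(1 / (2 * (n:ℝ))) * ((p + q) * A + p * B) := by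
      simp only [u, hz1, hz2, hpdef, hqdef, hAdef, hBdef]
    rw [this, abs_mul, abs_neg, abs_of_pos (by positivity : (0:ℝ) < 1 / (2 * (n:ℝ)))]
    have h1 : |(p + q) * A + p * B| ≤ (p + q) * |A| + p * |B| := by
      calc |(p + q) * A + p * B| ≤ |(p + q) * A| + |p * B| := abs_add_le _ _
        _ = (p + q) * |A| + p * |B| := by
            rw [abs_mul, abs_mul, abs_of_pos (by positivity), abs_of_pos hp]
    have h2 : (0:ℝ) < 1 / (2 * (n:ℝ)) := by positivity
    exact mul_le_mul_of_nonneg_left h1 h2.le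
  have hchain : 1 / (2 * (n:ℝ)) * ((p + q) * |A| + p * |B|) ≤
      1 / (2 * (n:ℝ)) * ((p + q) * (M * r ^ (n + 2) / ((n:ℝ) + 2)) +
        p * (M * ((1 - r ^ (n + 2)) / ((n:ℝ) + 2) + (r ^ 2 * q - 1) / ((n:ℝ) - 2)))) := by
    have := abs_nonneg A
    have := abs_nonneg B
    gcongr <;> positivity
  have hrn2 : r ^ (n + 2) = p * r ^ 2 := by rw [hpdef, pow_add]
  have hkey : 1 / (2 * (n:ℝ)) * ((p + q) * (M * r ^ (n + 2) / ((n:ℝ) + 2)) +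
        p * (M * ((1 - r ^ (n + 2)) / ((n:ℝ) + 2) + (r ^ 2 * q - 1) / ((n:ℝ) - 2)))) =
      M / ((n:ℝ) ^ 2 - 4) * (r ^ 2 - 2 / (n:ℝ) * p) := by
    rw [hrn2, hqdef]
    field_simp
    ring
  have hmain : |u r| ≤ M / ((n:ℝ) ^ 2 - 4) * (r ^ 2 - 2 / (n:ℝ) * r ^ (n:ℤ)) := by
    rw [hz1, ← hkey]
    linarith
  refine ⟨hmain, ?_, ?_⟩
  · refine hmain.trans ?_
    have h1 : r ^ 2 - 2 / (n:ℝ) * r ^ (n:ℤ) ≤ 1 := by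
      rw [hz1]
      have : r ^ 2 ≤ 1 := by nlinarith
      have h2 : (0:ℝ) ≤ 2 / (n:ℝ) * p := by positivity
      linarith
    have h2 : (0:ℝ) ≤ M / ((n:ℝ) ^ 2 - 4) := by positivity
    calc M / ((n:ℝ) ^ 2 - 4) * (r ^ 2 - 2 / (n:ℝ) * r ^ (n:ℤ)) ≤ M / ((n:ℝ) ^ 2 - 4) * 1 :=
          mul_le_mul_of_nonneg_left h1 h2
      _ = M / ((n:ℝ) ^ 2 - 4) := mul_one _
  · rw [div_le_div_iff₀ hnsq (by positivity)]
    have h9 : (9:ℝ) ≤ (n:ℝ) ^ 2 := by nlinarith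
    have h10 : M * 9 ≤ M * (n:ℝ) ^ 2 := mul_le_mul_of_nonneg_left h9 hM.le
    have h11 : 2 * M * ((n:ℝ) ^ 2 - 4) = M * (n:ℝ) ^ 2 + (M * (n:ℝ) ^ 2 - 8 * M) := by ring
    rw [h11]
    linarith
end
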